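/- Let m = kn + 1 with k ≥ 1 and n ≥ 2 (so gcd(m,n)=1). Let σ be a word of n S's and m W's, suppose the set R of m+n nonnegative integers with 0 ∈ R is compatible with σ, with sorted sequence 𝔯_1<…<𝔯_{m+n}, and define f_0 = 1 and f_i = σ^{-1}(W_{f_{i−1}}) for 1 ≤ i ≤ k+1. Then 𝔯_{f_k + 1} = m and |R ∩ {0,1,…,m+n}| = f_{k+1}. -/

import Mathlib

/-- The list of ranks of the lattice points visited by a path (excluding the final
point), starting from rank `r`.  A `true` entry is a north (`u`) step, which adds `m`
to the rank; a `false` entry is an east (`d`) step, which subtracts `n`. -/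
def rankWalk (m n : ℤ) : List Bool → ℤ → List ℤ
  | [], _ => []
  | b :: bs, r => r :: rankWalk m n bs (r + if b then m else -n)

/-- An `(m,n)`-path: a word of `n` north steps (`true`) and `m` east steps (`false`). -/
def IsPathWord (m n : ℕ) (P : List Bool) : Prop :=
  P.length = m + n ∧ P.count true = n

/-- An `(m,n)`-Dyck path: an `(m,n)`-path all of whose ranks are nonnegative. -/
def IsDyckWord (m n : ℕ) (P : List Bool) : Prop :=
  IsPathWord m n P ∧ ∀ r ∈ rankWalk (m : ℤ) (n : ℤ) P 0, 0 ≤ r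

/-- The rank set of a path: the ranks of its `m+n` lattice points other than the endpoint. -/
def rankSet (m n : ℕ) (P : List Bool) : Finset ℤ :=
  (rankWalk (m : ℤ) (n : ℤ) P 0).toFinset

/-- `R` is the rank set of some `(m,n)`-path. -/
def IsRankSet (m n : ℕ) (R : Finset ℤ) : Prop :=
  ∃ P : List Bool, IsPathWord m n P ∧ rankSet m n P = R

/-- `R` is the rank set of some `(m,n)`-Dyck path. -/
def IsDyckRankSet (m n : ℕ) (R : Finset ℤ) : Prop :=
  ∃ P : List Bool, IsDyckWord m n P ∧ rankSet m n P = R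

/-- A set `R` of `m + n` nonnegative integers containing `0`, with sorted sequence
`𝔯_1 < ⋯ < 𝔯_{m+n}`, is compatible with the word `σ` (where `true` = `S`, `false` = `W`)
if `𝔯_{σ⁻¹(S_i)} + m ∈ R` for all `i` and `𝔯_{σ⁻¹(W_j)} - n ∈ R` for all `j`. -/
def Compatible (m n : ℕ) (σ : List Bool) (R : Finset ℤ) : Prop :=
  R.card = m + n ∧ (0 : ℤ) ∈ R ∧ (∀ r ∈ R, 0 ≤ r) ∧
    ∀ p ∈ σ.zip (R.sort (· ≤ ·)),
      (p.1 = true → p.2 + (m : ℤ) ∈ R) ∧ (p.1 = false → p.2 - (n : ℤ) ∈ R)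

/-- The 1-based position of the `j`-th (1-based) occurrence of the letter `b` in the
word `w`; e.g. `nthPos w false j` is the position `σ⁻¹(W_j)` of the `j`-th `W`. -/
def nthPos (w : List Bool) (b : Bool) (j : ℕ) : ℕ :=
  ((List.range w.length).filter (fun p => w.getD p (!b) == b)).getD (j - 1) 0 + 1

/-- The positions `f_0 = 1` and `f_i = σ⁻¹(W_{f_{i-1}})`. -/
def fseq (σ : List Bool) : ℕ → ℕ
  | 0 => 1
  | i + 1 => nthPos σ false (fseq σ i)

/-- `𝔯_i`, the `i`-th smallest element of `R` (1-based). -/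
def sortedRank (R : Finset ℤ) (i : ℕ) : ℤ :=
  (R.sort (· ≤ ·)).getD (i - 1) 0

/-- `δ(R) = |R ∩ {0, 1, …, m+n}|`. -/
def deltaStat (m n : ℕ) (R : Finset ℤ) : ℕ :=
  (R.filter (fun r => 0 ≤ r ∧ r ≤ (m : ℤ) + n)).card


/-!
Split `R` into its `n`-chains, the maximal progressions `r, r + n, …` contained in `R`. Under
compatibility a chain start `M` cannot carry a `W`, so it carries an `S` and `M + m ∈ R`. There
are only `n` letters `S`, while every residue class mod `n` meets `R` (the residues met are closed
under `+ m`, and `m` is a unit mod `n`); so there is exactly one chain per class, and the `S`'s sit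
exactly on the chain starts. Telescoping along the chains shows that the chain ends sum to
`∑ (M + m)` over the starts, while the chain through `M + m` ends at or above `M + m`; hence the
chain ends are exactly the numbers `M + m`. Consequently `m ∈ R`, `m + n ∉ R`, and `r + n ∈ R` for
every `r ∈ R` below `m`. For `m = kn + 1` this puts `0, n, …, (k + 1)n` in `R`, and the `W`'s up
to `(i + 1)n` are the shifts by `n` of the elements up to `in`, so by induction `f_i` is the
position of `in` in `R`. Both claims follow, since `kn + 1 = m ∈ R` and `(k + 1)n = m + n - 1`.
-/

open Finset

namespace Finset

variable {α : Type*} [LinearOrder α]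

theorem card_filter_orderEmbOfFin (s : Finset α) {k : ℕ} (h : #s = k) (p : α → Prop)
    [DecidablePred p] : #{x ∈ s | p x} = #{i | p (s.orderEmbOfFin h i)} := by
  conv_lhs => rw [← map_orderEmbOfFin_univ s h]
  rw [filter_map, card_map]
  rfl

theorem card_filter_le_orderEmbOfFin (s : Finset α) {k : ℕ} (h : #s = k) (i : Fin k) :
    #{x ∈ s | x ≤ s.orderEmbOfFin h i} = i + 1 := by
  simp only [card_filter_orderEmbOfFin s h, OrderEmbedding.le_iff_le]
  rw [← Fin.card_Iic]
  congr 1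
  ext
  simp

theorem getD_sort_card_filter_le_sub_one {s : Finset α} {x : α} (hx : x ∈ s) (d : α) :
    (s.sort (· ≤ ·)).getD (#{y ∈ s | y ≤ x} - 1) d = x := by
  obtain ⟨i, rfl⟩ : x ∈ Set.range (s.orderEmbOfFin rfl) := by simpa using hx
  rw [card_filter_le_orderEmbOfFin, Nat.add_sub_cancel, List.getD_eq_getElem _ _ (by simp),
    orderEmbOfFin_apply]
  rfl

end Finset

theorem Finset.injOn_of_image_eq_univ_of_card_le {α β : Type*} [DecidableEq β] [Fintype β]
    {s : Finset α} {f : α → β} (hs : s.image f = univ) (hcard : #s ≤ Fintype.card β) :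
    Set.InjOn f s :=
  card_image_iff.mp (le_antisymm card_image_le (by rwa [hs, card_univ]))

section IntervalCounts

variable {R : Finset ℤ} {x : ℤ}

theorem card_filter_le_of_mem (hx : x ∈ R) :
    #{r ∈ R | r ≤ x} = #{r ∈ R | r ≤ x - 1} + 1 := by
  rw [← card_insert_of_notMem (s := {r ∈ R | r ≤ x - 1}) (a := x) (by simp)]
  congr 1
  ext r
  by_cases hrx : r = x
  · subst hrx
    simp [hx]
  · simp only [mem_filter, mem_insert, hrx, false_or]
    constructor <;> rintro ⟨hr, h⟩ <;> exact ⟨hr, by omega⟩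

theorem card_filter_le_of_notMem (hx : x ∉ R) :
    #{r ∈ R | r ≤ x} = #{r ∈ R | r ≤ x - 1} := by
  refine congrArg card (filter_congr fun r hr => ?_)
  have : r ≠ x := ne_of_mem_of_not_mem hr hx
  omega

theorem card_filter_le_add_sub_mem {n : ℕ} (h : ∀ r ∈ R, r ≤ x → r + n ∈ R) :
    #{r ∈ R | r ≤ x + n ∧ r - (n : ℤ) ∈ R} = #{r ∈ R | r ≤ x} := by
  rw [← card_image_of_injective {r ∈ R | r ≤ x} (add_left_injective (n : ℤ))]
  congr 1
  ext y
  simp only [mem_filter, mem_image]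
  constructor
  · rintro ⟨-, hyx, hyn⟩
    exact ⟨y - (n : ℤ), ⟨hyn, by omega⟩, by ring⟩
  · rintro ⟨r, ⟨hr, hrx⟩, rfl⟩
    exact ⟨h r hr hrx, by omega, by simpa using hr⟩

end IntervalCounts

/-- The `n`-chains of `R` are its maximal arithmetic progressions of step `n`;
`chainStarts` and `chainEnds` collect their least and greatest elements. -/
def chainStarts (n : ℕ) (R : Finset ℤ) : Finset ℤ := {r ∈ R | r - n ∉ R}

def chainEnds (n : ℕ) (R : Finset ℤ) : Finset ℤ := {r ∈ R | r + n ∉ R}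

section Chains

variable (n : ℕ) (R : Finset ℤ)

theorem image_add_filter_add_mem :
    {r ∈ R | r + (n : ℤ) ∈ R}.image (· + (n : ℤ)) = {r ∈ R | r - (n : ℤ) ∈ R} := by
  ext x
  simp only [mem_image, mem_filter]
  exact ⟨by rintro ⟨r, ⟨hr, hrn⟩, rfl⟩; simpa using ⟨hrn, hr⟩,
    fun ⟨hx, hxn⟩ => ⟨x - n, ⟨hxn, by simpa using hx⟩, by ring⟩⟩

theorem card_filter_sub_mem_eq_card_filter_add_mem :
    #{r ∈ R | r - (n : ℤ) ∈ R} = #{r ∈ R | r + (n : ℤ) ∈ R} := by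
  rw [← image_add_filter_add_mem, card_image_of_injective _ (add_left_injective _)]

theorem card_chainEnds : #(chainEnds n R) = #(chainStarts n R) := by
  have hs := card_filter_add_card_filter_not (s := R) (fun r => r - n ∈ R)
  have he := card_filter_add_card_filter_not (s := R) (fun r => r + n ∈ R)
  rw [card_filter_sub_mem_eq_card_filter_add_mem] at hs
  unfold chainStarts chainEnds
  omega

/-- Telescoping: each element of `R` that is not a chain start lies `n` above another one. -/
theorem sum_chainEnds :
    ∑ x ∈ chainEnds n R, x =
      ∑ x ∈ chainStarts n R, x + n * #{r ∈ R | r - (n : ℤ) ∈ R} := by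
  have hs := sum_filter_add_sum_filter_not R (fun r => r - n ∈ R) (fun r => r)
  have he := sum_filter_add_sum_filter_not R (fun r => r + n ∈ R) (fun r => r)
  rw [← image_add_filter_add_mem, sum_image (fun _ _ _ _ => add_right_cancel),
    sum_add_distrib, sum_const, nsmul_eq_mul] at hs
  rw [card_filter_sub_mem_eq_card_filter_add_mem]
  unfold chainStarts chainEnds
  linarith

variable [NeZero n]

theorem exists_mem_chainStarts_intCast_eq {r : ℤ} (hr : r ∈ R) :
    ∃ M ∈ chainStarts n R, (M : ZMod n) = r := by
  obtain ⟨M, hM, hmin⟩ :=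
    exists_min_image {x ∈ R | ((x : ℤ) : ZMod n) = r} id ⟨r, by simp [hr]⟩
  rw [mem_filter] at hM
  refine ⟨M, mem_filter.2 ⟨hM.1, fun h => ?_⟩, hM.2⟩
  have : M ≤ M - n := hmin (M - n) (mem_filter.2 ⟨h, by simp [hM.2]⟩)
  have := NeZero.pos n
  omega

theorem exists_mem_chainEnds_le {r : ℤ} (hr : r ∈ R) :
    ∃ X ∈ chainEnds n R, (X : ZMod n) = r ∧ r ≤ X := by
  obtain ⟨X, hX, hmax⟩ :=
    exists_max_image {x ∈ R | ((x : ℤ) : ZMod n) = r ∧ r ≤ x} id ⟨r, by simp [hr]⟩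
  rw [mem_filter] at hX
  refine ⟨X, mem_filter.2 ⟨hX.1, fun h => ?_⟩, hX.2⟩
  have : X + n ≤ X := hmax (X + n) (mem_filter.2 ⟨h, by simp [hX.2.1], by omega⟩)
  have := NeZero.pos n
  omega

variable {n R}

theorem image_intCast_chainStarts (hcover : ∀ c : ZMod n, ∃ r ∈ R, (r : ZMod n) = c) :
    (chainStarts n R).image (Int.cast : ℤ → ZMod n) = univ := by
  refine eq_univ_of_forall fun c => ?_
  obtain ⟨r, hr, rfl⟩ := hcover c
  simpa using exists_mem_chainStarts_intCast_eq n R hr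

theorem le_card_chainStarts (hcover : ∀ c : ZMod n, ∃ r ∈ R, (r : ZMod n) = c) :
    n ≤ #(chainStarts n R) := by
  simpa [image_intCast_chainStarts hcover] using
    card_image_le (s := chainStarts n R) (f := (Int.cast : ℤ → ZMod n))

/-- Each chain start `M` has `M + m ∈ R`, so the chain through `M + m` ends at some `X ≥ M + m`;
by `sum_chainEnds` the ends sum to exactly `∑ (M + m)`, which forces `X = M + m`. -/
theorem chainEnds_eq_image_chainStarts {m : ℕ} (hR : #R = m + n)
    (hcover : ∀ c : ZMod n, ∃ r ∈ R, (r : ZMod n) = c) (hstarts : #(chainStarts n R) ≤ n)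
    (hadd : ∀ M ∈ chainStarts n R, M + m ∈ R) :
    chainEnds n R = (chainStarts n R).image (· + (m : ℤ)) := by
  have hPcard : #(chainStarts n R) = n := le_antisymm hstarts (le_card_chainStarts hcover)
  have hPinj : Set.InjOn (Int.cast : ℤ → ZMod n) (chainStarts n R) := by
    refine injOn_of_image_eq_univ_of_card_le (image_intCast_chainStarts hcover) ?_
    rw [ZMod.card, hPcard]
  choose! g hgQ hgcast hgle using fun M hM => exists_mem_chainEnds_le n R (hadd M hM)
  have hginj : Set.InjOn g (chainStarts n R) := fun M hM M' hM' h =>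
    hPinj hM hM' <| by
      have := (hgcast M hM).symm.trans (h ▸ hgcast M' hM')
      push_cast at this
      exact add_right_cancel this
  have hgimg : (chainStarts n R).image g = chainEnds n R :=
    eq_of_subset_of_card_le (image_subset_iff.2 hgQ)
      (by rw [card_image_of_injOn hginj, card_chainEnds])
  have hnonstarts : #{r ∈ R | r - (n : ℤ) ∈ R} = m := by
    have := card_filter_add_card_filter_not (s := R) (fun r => r - (n : ℤ) ∈ R)
    unfold chainStarts at hPcard
    omega
  have hsum : ∑ M ∈ chainStarts n R, (M + m) = ∑ M ∈ chainStarts n R, g M := by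
    rw [← (sum_image hginj : ∑ X ∈ (chainStarts n R).image g, X = _), hgimg, sum_chainEnds,
      sum_add_distrib, sum_const, hPcard, hnonstarts, nsmul_eq_mul, mul_comm]
  rw [← hgimg]
  exact image_congr fun M hM => ((sum_eq_sum_iff_of_le hgle).1 hsum M hM).symm

end Chains

/-- The letter of `σ` at the position of `x` in the increasing enumeration of `R`
(junk unless `x ∈ R`). -/
def letterAt (σ : List Bool) (R : Finset ℤ) (x : ℤ) : Bool :=
  σ.getD (#{r ∈ R | r ≤ x} - 1) true

section Letters

variable {σ : List Bool} {R : Finset ℤ}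

theorem letterAt_orderEmbOfFin (hR : #R = σ.length) (i : Fin σ.length) :
    letterAt σ R (R.orderEmbOfFin hR i) = σ[i] := by
  rw [letterAt, card_filter_le_orderEmbOfFin, Nat.add_sub_cancel, List.getD_eq_getElem _ _ i.2,
    Fin.getElem_fin]

theorem card_filter_letterAt_eq_count (hR : #R = σ.length) (b : Bool) :
    #{r ∈ R | letterAt σ R r = b} = σ.count b := by
  simp only [card_filter_orderEmbOfFin R hR, letterAt_orderEmbOfFin]
  exact Fin.card_filter_univ_eq_vector_get_eq_count b ⟨σ, rfl⟩

theorem nthPos_card_filter_letterAt (hR : #R = σ.length) {x : ℤ} (hx : x ∈ R)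
    (hW : letterAt σ R x = false) :
    nthPos σ false #{r ∈ R | r ≤ x ∧ letterAt σ R r = false} = #{r ∈ R | r ≤ x} := by
  obtain ⟨i, rfl⟩ : x ∈ Set.range (R.orderEmbOfFin hR) := by simpa using hx
  rw [letterAt_orderEmbOfFin] at hW
  set S : Finset ℕ := {p ∈ range σ.length | σ.getD p true = false}
  have hsort : S.sort (· ≤ ·) =
      (List.range σ.length).filter (fun p => σ.getD p (!false) == false) := by
    have hS : S = ((List.range σ.length).filter (σ.getD · (!false) == false)).toFinset := by
      ext p
      simp [S]
    rw [hS, List.toFinset_sort _ (List.nodup_range.filter _)]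
    exact (List.pairwise_lt_range.filter _).imp le_of_lt
  have hcount : #{r ∈ R | r ≤ R.orderEmbOfFin hR i ∧ letterAt σ R r = false} =
      #{p ∈ S | p ≤ (i : ℕ)} := by
    rw [card_filter_orderEmbOfFin R hR, filter_filter, ← Nat.Iio_eq_range,
      ← Fin.map_valEmbedding_univ, filter_map, card_map]
    congr 1
    ext j
    simp [letterAt_orderEmbOfFin, and_comm]
  have hiS : (i : ℕ) ∈ S := by simpa [S, List.getD_eq_getElem _ _ i.2] using hW
  rw [nthPos, ← hsort, hcount, getD_sort_card_filter_le_sub_one hiS, card_filter_le_orderEmbOfFin]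

end Letters

namespace Compatible

variable {m n : ℕ} {σ : List Bool} {R : Finset ℤ}

theorem letterAt_imp (h : Compatible m n σ R) (hlen : σ.length = m + n) {x : ℤ} (hx : x ∈ R) :
    (letterAt σ R x = true → x + m ∈ R) ∧ (letterAt σ R x = false → x - n ∈ R) := by
  have hR : #R = σ.length := h.1.trans hlen.symm
  obtain ⟨i, rfl⟩ : x ∈ Set.range (R.orderEmbOfFin hR) := by simpa using hx
  rw [letterAt_orderEmbOfFin]
  refine h.2.2.2 (σ[i], R.orderEmbOfFin hR i) ?_
  rw [orderEmbOfFin_apply]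
  exact List.mem_iff_getElem.2 ⟨i, by simp [hR], List.getElem_zip⟩

theorem chainStarts_subset (h : Compatible m n σ R) (hlen : σ.length = m + n) :
    chainStarts n R ⊆ {r ∈ R | letterAt σ R r = true} := by
  intro M hM
  rw [chainStarts, mem_filter] at hM
  refine mem_filter.2 ⟨hM.1, ?_⟩
  by_contra hb
  exact hM.2 ((h.letterAt_imp hlen hM.1).2 (by simpa using hb))

theorem add_mem_of_mem_chainStarts (h : Compatible m n σ R) (hlen : σ.length = m + n) {M : ℤ}
    (hM : M ∈ chainStarts n R) : M + m ∈ R :=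
  (h.letterAt_imp hlen (mem_filter.1 hM).1).1 (mem_filter.1 (h.chainStarts_subset hlen hM)).2

theorem card_chainStarts_le (h : Compatible m n σ R) (hlen : σ.length = m + n)
    (hcount : σ.count true = n) : #(chainStarts n R) ≤ n := by
  calc #(chainStarts n R) ≤ #{r ∈ R | letterAt σ R r = true} :=
        card_le_card (h.chainStarts_subset hlen)
    _ = n := by rw [card_filter_letterAt_eq_count (h.1.trans hlen.symm), hcount]

theorem zero_mem_chainStarts [NeZero n] (h : Compatible m n σ R) : (0 : ℤ) ∈ chainStarts n R :=
  mem_filter.2 ⟨h.2.1, fun hn => by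
    have := h.2.2.1 _ hn
    have := NeZero.pos n
    omega⟩

theorem exists_mem_intCast_eq [NeZero n] (h : Compatible m n σ R) (hlen : σ.length = m + n)
    (hcop : m.Coprime n) (c : ZMod n) : ∃ r ∈ R, (r : ZMod n) = c := by
  have hmul : ∀ t : ℕ, ∃ r ∈ R, (r : ZMod n) = t * m := by
    intro t
    induction t with
    | zero => exact ⟨0, h.2.1, by simp⟩
    | succ t ih =>
      obtain ⟨r, hr, hrt⟩ := ih
      obtain ⟨M, hM, hMr⟩ := exists_mem_chainStarts_intCast_eq n R hr
      exact ⟨M + m, h.add_mem_of_mem_chainStarts hlen hM, by push_cast [hMr, hrt]; ring⟩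
  obtain ⟨r, hr, hrc⟩ := hmul (c * (m : ZMod n)⁻¹).val
  refine ⟨r, hr, ?_⟩
  rw [hrc, ZMod.natCast_zmod_val, mul_assoc, mul_comm _ (m : ZMod n),
    ZMod.coe_mul_inv_eq_one m hcop, mul_one]

theorem chainEnds_eq [NeZero n] (h : Compatible m n σ R) (hlen : σ.length = m + n)
    (hcount : σ.count true = n) (hcop : m.Coprime n) :
    chainEnds n R = (chainStarts n R).image (· + (m : ℤ)) :=
  chainEnds_eq_image_chainStarts h.1 (h.exists_mem_intCast_eq hlen hcop)
    (h.card_chainStarts_le hlen hcount) fun _ hM => h.add_mem_of_mem_chainStarts hlen hM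

theorem letterAt_eq_false_iff [NeZero n] (h : Compatible m n σ R) (hlen : σ.length = m + n)
    (hcount : σ.count true = n) (hcop : m.Coprime n) {x : ℤ} (hx : x ∈ R) :
    letterAt σ R x = false ↔ x - n ∈ R := by
  refine ⟨(h.letterAt_imp hlen hx).2, fun hxn => ?_⟩
  have hS : chainStarts n R = {r ∈ R | letterAt σ R r = true} := by
    refine eq_of_subset_of_card_le (h.chainStarts_subset hlen) ?_
    rw [card_filter_letterAt_eq_count (h.1.trans hlen.symm), hcount]
    exact le_card_chainStarts (h.exists_mem_intCast_eq hlen hcop)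
  by_contra hb
  have : x ∈ chainStarts n R := hS ▸ mem_filter.2 ⟨hx, by simpa using hb⟩
  exact (mem_filter.1 this).2 hxn

theorem add_mem_of_lt [NeZero n] (h : Compatible m n σ R) (hlen : σ.length = m + n)
    (hcount : σ.count true = n) (hcop : m.Coprime n) {r : ℤ} (hr : r ∈ R) (hrm : r < m) :
    r + n ∈ R := by
  by_contra hrn
  have : r ∈ (chainStarts n R).image (· + (m : ℤ)) :=
    h.chainEnds_eq hlen hcount hcop ▸ mem_filter.2 ⟨hr, hrn⟩
  obtain ⟨M, hM, rfl⟩ := mem_image.1 this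
  have := h.2.2.1 M (mem_filter.1 hM).1
  omega

theorem add_notMem [NeZero n] (h : Compatible m n σ R) (hlen : σ.length = m + n)
    (hcount : σ.count true = n) (hcop : m.Coprime n) : (m + n : ℤ) ∉ R := by
  have : (0 : ℤ) + m ∈ chainEnds n R :=
    h.chainEnds_eq hlen hcount hcop ▸ mem_image_of_mem _ h.zero_mem_chainStarts
  simpa using (mem_filter.1 this).2

theorem mul_mem [NeZero n] (h : Compatible m n σ R) (hlen : σ.length = m + n)
    (hcount : σ.count true = n) (hcop : m.Coprime n) {i : ℕ} (hi : (i : ℤ) * n < m + n) :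
    (i : ℤ) * n ∈ R := by
  induction i with
  | zero => simpa using h.2.1
  | succ i ih =>
    push_cast at hi ⊢
    simpa [add_mul] using h.add_mem_of_lt hlen hcount hcop (ih (by linarith)) (by linarith)

theorem fseq_eq [NeZero n] (h : Compatible m n σ R) (hlen : σ.length = m + n)
    (hcount : σ.count true = n) (hcop : m.Coprime n) {i : ℕ} (hi : (i : ℤ) * n < m + n) :
    fseq σ i = #{r ∈ R | r ≤ (i : ℤ) * n} := by
  induction i with
  | zero =>
    have : #{r ∈ R | r ≤ 0 - 1} = 0 :=
      card_eq_zero.2 (filter_eq_empty_iff.2 fun r hr => by have := h.2.2.1 r hr; omega)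
    rw [fseq, Nat.cast_zero, zero_mul, card_filter_le_of_mem h.2.1, this]
  | succ i ih =>
    push_cast at hi
    have hx := h.mul_mem hlen hcount hcop hi
    have hW : letterAt σ R ((i + 1 : ℕ) * n) = false :=
      (h.letterAt_eq_false_iff hlen hcount hcop hx).2 <| by
        simpa [add_mul] using h.mul_mem hlen hcount hcop (i := i) (by linarith)
    rw [fseq, ih (by linarith), ← nthPos_card_filter_letterAt (h.1.trans hlen.symm) hx hW,
      ← card_filter_le_add_sub_mem fun r hr hri =>
        h.add_mem_of_lt hlen hcount hcop hr (by linarith)]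
    refine congrArg (fun s => nthPos σ false #s) (filter_congr fun r hr => ?_)
    rw [h.letterAt_eq_false_iff hlen hcount hcop hr]
    push_cast
    simp [add_mul]

end Compatible

theorem compatible_delta_kn_plus_one_general (m n k : ℕ) (hn : 2 ≤ n)
    (hm : m = k * n + 1) (σ : List Bool) (hlen : σ.length = m + n)
    (hcount : σ.count true = n) (R : Finset ℤ) (hcomp : Compatible m n σ R) :
    sortedRank R (fseq σ k + 1) = (m : ℤ) ∧ deltaStat m n R = fseq σ (k + 1) := by
  have : NeZero n := ⟨by omega⟩
  have hcop : m.Coprime n := by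
    rw [hm, mul_comm, Nat.coprime_mul_left_add_left]
    exact Nat.coprime_one_left n
  have hmZ : (m : ℤ) = k * n + 1 := by exact_mod_cast hm
  have hmR : (m : ℤ) ∈ R := by
    simpa using hcomp.add_mem_of_mem_chainStarts hlen hcomp.zero_mem_chainStarts
  have hk1 : ((k + 1 : ℕ) : ℤ) * n = m + n - 1 := by push_cast; linarith
  refine ⟨?_, ?_⟩
  · rw [hcomp.fseq_eq hlen hcount hcop (by omega), show (k : ℤ) * n = m - 1 by omega,
      ← card_filter_le_of_mem hmR]
    exact getD_sort_card_filter_le_sub_one hmR 0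
  · rw [hcomp.fseq_eq hlen hcount hcop (by rw [hk1]; omega), hk1,
      ← card_filter_le_of_notMem (hcomp.add_notMem hlen hcount hcop)]
    exact congrArg card (filter_congr fun r hr => by simp [hcomp.2.2.1 r hr])

/-- Let `m = kn + 1` with `k ≥ 1` and `n ≥ 2`.  If the set `R` is
compatible with the word `σ` of `n` `S`'s and `m` `W`'s, then `𝔯_{f_k + 1} = m` and
`|R ∩ {0, 1, …, m+n}| = f_{k+1}`, where `f_0 = 1` and `f_i = σ⁻¹(W_{f_{i-1}})`. -/
theorem compatible_delta_kn_plus_one (m n k : ℕ) (hk : 1 ≤ k) (hn : 2 ≤ n)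
    (hm : m = k * n + 1) (σ : List Bool) (hlen : σ.length = m + n)
    (hcount : σ.count true = n) (R : Finset ℤ) (hcomp : Compatible m n σ R) :
    sortedRank R (fseq σ k + 1) = (m : ℤ) ∧ deltaStat m n R = fseq σ (k + 1) :=
  compatible_delta_kn_plus_one_general m n k hn hm σ hlen hcount R hcomp
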